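/- Strict tightening of Voigt over zeroth-order constraints (pointwise witness): assume 0 < V̄ < 1, set α = Δκ/(Δκ + 2Δμ) ∈ (0,1), θ = min{1, V̄/α}, and let Â = M(κ⁻ + θ·Δκ, μ⁻). Then θ > V̄ and α·θ ≤ V̄; the matrix Â satisfies M(κ⁻,μ⁻) ⪯ Â ⪯ M(κ⁺,μ⁺) and the trace bound trace(Â) ≤ V̄·trace(M(κ⁺,μ⁺)) + (1 − V̄)·trace(M(κ⁻,μ⁻)); yet every v ∈ [0,1] with Â ⪯ (1−v)·M(κ⁻,μ⁻) + v·M(κ⁺,μ⁺) satisfies v ≥ θ > V̄. Hence Â is zeroth-order feasible but admits no Voigt-admissible volume fraction at most V̄. -/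

import Mathlib

/-!
The quadratic form of `KM κ μ` is `κ (e₁ + e₂)² + μ ((e₁ - e₂)² + 2 e₃²)`, so the Loewner order
between isotropic Kelvin–Mandel matrices is the componentwise order of `(κ, μ)`. Voigt
admissibility of `Â` therefore compares bulk moduli only, `κ⁻ + θ Δκ ≤ κ⁻ + v Δκ`, forcing
`v ≥ θ`, whereas the trace bound only asks `θ Δκ ≤ V̄ (Δκ + 2 Δμ)`, i.e. `α θ ≤ V̄`; since `α < 1`,
`θ` can exceed `V̄`.
-/

open Matrix

/-- Kelvin–Mandel matrix of the isotropic plane-stress elasticity tensor with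
bulk modulus `κ` and shear modulus `μ`. -/
noncomputable def KM (κ μ : ℝ) : Matrix (Fin 3) (Fin 3) ℝ :=
  !![κ + μ, κ - μ, 0; κ - μ, κ + μ, 0; 0, 0, 2 * μ]

lemma isHermitian_KM (κ μ : ℝ) : (KM κ μ).IsHermitian := by
  ext i j
  fin_cases i <;> fin_cases j <;> simp [KM]

lemma dotProduct_KM_mulVec (κ μ : ℝ) (x : Fin 3 → ℝ) :
    x ⬝ᵥ KM κ μ *ᵥ x = κ * (x 0 + x 1) ^ 2 + μ * ((x 0 - x 1) ^ 2 + 2 * x 2 ^ 2) := by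
  simp [KM, mulVec, dotProduct, Fin.sum_univ_three]
  ring

lemma posSemidef_KM_iff {κ μ : ℝ} : (KM κ μ).PosSemidef ↔ 0 ≤ κ ∧ 0 ≤ μ := by
  rw [posSemidef_iff_dotProduct_mulVec]
  refine ⟨fun ⟨_, h⟩ => ?_, fun ⟨hκ, hμ⟩ => ⟨isHermitian_KM κ μ, fun x => ?_⟩⟩
  · have hbulk := h ![1, 1, 0]
    have hshear := h ![1, -1, 0]
    rw [star_trivial, dotProduct_KM_mulVec] at hbulk hshear
    exact ⟨by simpa using hbulk, by simpa using hshear⟩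
  · rw [star_trivial, dotProduct_KM_mulVec]
    positivity

lemma KM_sub_KM (κ μ κ' μ' : ℝ) : KM κ μ - KM κ' μ' = KM (κ - κ') (μ - μ') := by
  ext i j
  fin_cases i <;> fin_cases j <;> simp [KM] <;> ring

lemma posSemidef_KM_sub_KM_iff {κ μ κ' μ' : ℝ} :
    (KM κ μ - KM κ' μ').PosSemidef ↔ κ' ≤ κ ∧ μ' ≤ μ := by
  rw [KM_sub_KM, posSemidef_KM_iff, sub_nonneg, sub_nonneg]

lemma smul_KM_add_smul_KM (s t κ μ κ' μ' : ℝ) :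
    s • KM κ μ + t • KM κ' μ' = KM (s * κ + t * κ') (s * μ + t * μ') := by
  ext i j
  fin_cases i <;> fin_cases j <;> simp [KM] <;> ring

lemma trace_KM (κ μ : ℝ) : (KM κ μ).trace = 2 * κ + 4 * μ := by
  simp [KM, trace, Fin.sum_univ_three]
  ring

lemma div_add_mem_Ioo {a b : ℝ} (ha : 0 < a) (hb : 0 < b) : a / (a + b) ∈ Set.Ioo (0 : ℝ) 1 :=
  ⟨by positivity, (div_lt_one (by positivity)).2 (by linarith)⟩

lemma lt_min_one_div {V α : ℝ} (hV0 : 0 < V) (hV1 : V < 1) (hα0 : 0 < α) (hα1 : α < 1) :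
    V < min 1 (V / α) :=
  lt_min hV1 ((lt_div_iff₀ hα0).2 (by nlinarith))

lemma mul_min_one_div_le {V α : ℝ} (hα : 0 < α) : α * min 1 (V / α) ≤ V :=
  calc α * min 1 (V / α) ≤ α * (V / α) := by gcongr; exact min_le_right _ _
    _ = V := mul_div_cancel₀ V hα.ne'

theorem voigt_strictly_tighter_than_zeroth_order_general
    (κm κp μm μp : ℝ) (hκ : κm < κp) (hμ : μm < μp)
    (Vbar : ℝ) (hV : Vbar ∈ Set.Ioo (0 : ℝ) 1)
    (α θ : ℝ) (hα : α = (κp - κm) / ((κp - κm) + 2 * (μp - μm)))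
    (hθ : θ = min 1 (Vbar / α))
    (Ahat : Matrix (Fin 3) (Fin 3) ℝ) (hA : Ahat = KM (κm + θ * (κp - κm)) μm) :
    α ∈ Set.Ioo (0 : ℝ) 1 ∧
    Vbar < θ ∧ α * θ ≤ Vbar ∧
    (Ahat - KM κm μm).PosSemidef ∧ (KM κp μp - Ahat).PosSemidef ∧
    Ahat.trace ≤ Vbar * (KM κp μp).trace + (1 - Vbar) * (KM κm μm).trace ∧
    ∀ v : ℝ, v ∈ Set.Icc (0 : ℝ) 1 →
      ((1 - v) • KM κm μm + v • KM κp μp - Ahat).PosSemidef → θ ≤ v := by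
  have hΔκ : 0 < κp - κm := sub_pos.2 hκ
  have hD : 0 < (κp - κm) + 2 * (μp - μm) := by linarith
  have hα_mem : α ∈ Set.Ioo (0 : ℝ) 1 := hα ▸ div_add_mem_Ioo hΔκ (by linarith)
  have hθV : Vbar < θ := hθ ▸ lt_min_one_div hV.1 hV.2 hα_mem.1 hα_mem.2
  have hθ1 : θ ≤ 1 := hθ ▸ min_le_left _ _
  have hαθ : α * θ ≤ Vbar := hθ ▸ mul_min_one_div_le hα_mem.1
  have hαD : α * ((κp - κm) + 2 * (μp - μm)) = κp - κm :=
    hα ▸ div_mul_cancel₀ _ hD.ne'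
  subst hA
  refine ⟨hα_mem, hθV, hαθ, ?_, ?_, ?_, fun v _ hv => ?_⟩
  · have : 0 ≤ θ * (κp - κm) := mul_nonneg (by linarith [hV.1]) hΔκ.le
    exact posSemidef_KM_sub_KM_iff.2 ⟨by linarith, le_rfl⟩
  · have : θ * (κp - κm) ≤ κp - κm := mul_le_of_le_one_left hΔκ.le hθ1
    exact posSemidef_KM_sub_KM_iff.2 ⟨by linarith, hμ.le⟩
  · have : θ * (κp - κm) ≤ Vbar * ((κp - κm) + 2 * (μp - μm)) :=
      calc θ * (κp - κm) = α * θ * ((κp - κm) + 2 * (μp - μm)) := by linear_combination -θ * hαD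
        _ ≤ Vbar * ((κp - κm) + 2 * (μp - μm)) := by gcongr
    simp only [trace_KM]
    linarith
  · rw [smul_KM_add_smul_KM, posSemidef_KM_sub_KM_iff] at hv
    exact le_of_mul_le_mul_right (by linarith [hv.1]) hΔκ

/-- Strict tightening of Voigt over zeroth-order constraints (pointwise
witness): the isotropic matrix `Â = M(κ⁻ + θΔκ, μ⁻)` with `θ = min{1, V̄/α}`,
`α = Δκ/(Δκ + 2Δμ)`, is zeroth-order feasible (Loewner bounds and trace bound),
yet every Voigt-admissible volume fraction for it exceeds `V̄`. -/
theorem voigt_strictly_tighter_than_zeroth_order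
    (κm κp μm μp : ℝ) (hκm : 0 < κm) (hκ : κm < κp) (hμm : 0 < μm) (hμ : μm < μp)
    (Vbar : ℝ) (hV : Vbar ∈ Set.Ioo (0 : ℝ) 1)
    (α θ : ℝ) (hα : α = (κp - κm) / ((κp - κm) + 2 * (μp - μm)))
    (hθ : θ = min 1 (Vbar / α))
    (Ahat : Matrix (Fin 3) (Fin 3) ℝ) (hA : Ahat = KM (κm + θ * (κp - κm)) μm) :
    α ∈ Set.Ioo (0 : ℝ) 1 ∧
    Vbar < θ ∧ α * θ ≤ Vbar ∧
    (Ahat - KM κm μm).PosSemidef ∧ (KM κp μp - Ahat).PosSemidef ∧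
    Ahat.trace ≤ Vbar * (KM κp μp).trace + (1 - Vbar) * (KM κm μm).trace ∧
    ∀ v : ℝ, v ∈ Set.Icc (0 : ℝ) 1 →
      ((1 - v) • KM κm μm + v • KM κp μp - Ahat).PosSemidef → θ ≤ v :=
  voigt_strictly_tighter_than_zeroth_order_general κm κp μm μp hκ hμ Vbar hV α θ hα hθ Ahat hA
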